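/- For all x, ξ ∈ ℝ^d and t > 0 the kernel H solves the parabolic equation associated with the complex Ornstein–Uhlenbeck operator: the time derivative ∂H/∂t(x,ξ,t) exists and equals α·Σ_{i=1}^d ∂²H/∂x_i²(x,ξ,t) + Σ_{i=1}^d (Sx)_i · ∂H/∂x_i(x,ξ,t) − δ·H(x,ξ,t). -/

import Mathlib

open MeasureTheory

/-- Rotation `e^{tS}x` given by the matrix exponential. -/
noncomputable def ouRot (d : ℕ) (S : Matrix (Fin d) (Fin d) ℝ) (t : ℝ)
    (x : EuclideanSpace ℝ (Fin d)) : EuclideanSpace ℝ (Fin d) :=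
  WithLp.toLp 2 (Matrix.mulVec (NormedSpace.exp (t • S)) (fun j => x j))

/-- The scalar complex Ornstein--Uhlenbeck kernel
`H(x,ξ,t) = (4παt)^{-d/2} exp(-δt - |e^{tS}x - ξ|²/(4αt))`. -/
noncomputable def ouH (d : ℕ) (α δ : ℂ) (S : Matrix (Fin d) (Fin d) ℝ)
    (x ξ : EuclideanSpace ℝ (Fin d)) (t : ℝ) : ℂ :=
  (4 * (Real.pi : ℂ) * α * t) ^ (-(d : ℂ) / 2) *
    Complex.exp (-(δ * t) - ((‖ouRot d S t x - ξ‖ ^ 2 : ℝ) : ℂ) / (4 * α * t))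

/-!
Write `w = e^{tS}x - ξ` and `m = 4αt`. For skew-symmetric `S` the matrix `e^{tS}` is orthogonal,
so along a coordinate line `|e^{tS}(x + s eᵢ) - ξ|² = |w|² + 2 s Pᵢ + s²` with
`Pᵢ = ⟨w, e^{tS} eᵢ⟩`, and `H` is a Gaussian in `s`: `∂ᵢH = -(2Pᵢ/m) H` and
`∂ᵢ²H = ((2Pᵢ/m)² - 2/m) H`. The vectors `e^{tS} eᵢ` form an orthonormal basis, hence
`∑ Pᵢ² = |w|²` and `∑ (Sx)ᵢ Pᵢ = ⟨w, e^{tS} S x⟩`, which is half of `∂ₜ|w|²`. Comparing with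
`∂ₜH`, computed directly, gives the equation.
-/

open NormedSpace Matrix

open scoped RealInnerProductSpace

theorem LinearIsometry.norm_map_add_smul_sub_sq {E F : Type*} [NormedAddCommGroup E]
    [InnerProductSpace ℝ E] [NormedAddCommGroup F] [InnerProductSpace ℝ F]
    (U : E →ₗᵢ[ℝ] F) (x e : E) (ξ : F) (s : ℝ) :
    ‖U (x + s • e) - ξ‖ ^ 2 = ‖U x - ξ‖ ^ 2 + 2 * ⟪U x - ξ, U e⟫ * s + ‖e‖ ^ 2 * s ^ 2 := by
  rw [map_add, map_smul, add_sub_right_comm, norm_add_sq_real, inner_smul_right, norm_smul,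
    U.norm_map, Real.norm_eq_abs, mul_pow, sq_abs]
  ring

namespace LinearIsometryEquiv

variable {ι : Type*} [Fintype ι] [DecidableEq ι]
  (U : EuclideanSpace ℝ ι ≃ₗᵢ[ℝ] EuclideanSpace ℝ ι)

theorem sum_inner_apply_single_sq (w : EuclideanSpace ℝ ι) :
    ∑ i, ⟪w, U (EuclideanSpace.single i 1)⟫ ^ 2 = ‖w‖ ^ 2 := by
  have h := ((EuclideanSpace.basisFun ι ℝ).map U).sum_inner_mul_inner w w
  simp only [OrthonormalBasis.map_apply, EuclideanSpace.basisFun_apply,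
    real_inner_self_eq_norm_sq] at h
  rw [← h]
  exact Finset.sum_congr rfl fun i _ => by rw [sq, real_inner_comm w]

theorem sum_mul_inner_apply_single (v w : EuclideanSpace ℝ ι) :
    ∑ i, v i * ⟪w, U (EuclideanSpace.single i 1)⟫ = ⟪w, U v⟫ := by
  rw [← ((EuclideanSpace.basisFun ι ℝ).map U).sum_inner_mul_inner w (U v)]
  refine Finset.sum_congr rfl fun i _ => ?_
  rw [OrthonormalBasis.map_apply, EuclideanSpace.basisFun_apply, U.inner_map_map,
    EuclideanSpace.inner_single_left]
  simp [mul_comm]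

end LinearIsometryEquiv

namespace Matrix

variable {n : Type*} [Fintype n] [DecidableEq n] {S : Matrix n n ℝ}

theorem exp_smul_mem_orthogonalGroup (hS : Sᵀ = -S) (t : ℝ) :
    exp (t • S) ∈ orthogonalGroup n ℝ := by
  rw [mem_orthogonalGroup_iff, ← exp_transpose, transpose_smul, hS, smul_neg,
    ← exp_add_of_commute _ _ (Commute.refl (t • S)).neg_right, add_neg_cancel, exp_zero]

noncomputable def expSmulIsometry (hS : Sᵀ = -S) (t : ℝ) :
    EuclideanSpace ℝ n ≃ₗᵢ[ℝ] EuclideanSpace ℝ n :=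
  Unitary.linearIsometryEquiv
    ⟨toEuclideanCLM (n := n) (𝕜 := ℝ) (exp (t • S)),
      Unitary.map_mem _ (exp_smul_mem_orthogonalGroup hS t)⟩

theorem hasDerivAt_exp_smul_mulVec (S : Matrix n n ℝ) (v : EuclideanSpace ℝ n) (t : ℝ) :
    HasDerivAt (fun τ : ℝ => WithLp.toLp 2 (exp (τ • S) *ᵥ v.ofLp))
      (WithLp.toLp 2 (exp (t • S) *ᵥ (S *ᵥ v.ofLp))) t := by
  -- matrices carry no global norm; any normed-algebra structure will do to differentiate `exp`
  let : NormedRing (Matrix n n ℝ) := Matrix.linftyOpNormedRing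
  let : NormedAlgebra ℝ (Matrix n n ℝ) := Matrix.linftyOpNormedAlgebra
  let L : Matrix n n ℝ →ₗ[ℝ] EuclideanSpace ℝ n :=
    (LinearMap.applyₗ v).comp (toEuclideanLin (𝕜 := ℝ) (m := n) (n := n)).toLinearMap
  rw [mulVec_mulVec]
  exact L.toContinuousLinearMap.hasFDerivAt.comp_hasDerivAt t (hasDerivAt_exp_smul_const S t)

end Matrix

theorem hasDerivAt_mul_cexp_sub_quadratic (c k m : ℂ) (a b s : ℝ) :
    HasDerivAt (fun s : ℝ => c * Complex.exp (k - ((a + b * s + s ^ 2 : ℝ) : ℂ) / m))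
      (c * Complex.exp (k - ((a + b * s + s ^ 2 : ℝ) : ℂ) / m) * (-((b + 2 * s : ℝ) : ℂ) / m))
      s := by
  have hq : HasDerivAt (fun s : ℝ => a + b * s + s ^ 2) (b + 2 * s) s := by
    simpa using (((hasDerivAt_id' s).const_mul b).const_add a).fun_add (hasDerivAt_pow 2 s)
  refine (((hq.ofReal_comp.div_const m).const_sub k).cexp.const_mul c).congr_deriv ?_
  ring

theorem deriv_mul_cexp_sub_quadratic (c k m : ℂ) (a b : ℝ) :
    deriv (fun s : ℝ => c * Complex.exp (k - ((a + b * s + s ^ 2 : ℝ) : ℂ) / m)) 0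
      = c * Complex.exp (k - a / m) * (-b / m) := by
  rw [(hasDerivAt_mul_cexp_sub_quadratic c k m a b 0).deriv]
  simp

theorem deriv_deriv_mul_cexp_sub_quadratic (c k m : ℂ) (a b : ℝ) :
    deriv (deriv fun s : ℝ => c * Complex.exp (k - ((a + b * s + s ^ 2 : ℝ) : ℂ) / m)) 0
      = c * Complex.exp (k - a / m) * ((b / m) ^ 2 - 2 / m) := by
  have hlin : HasDerivAt (fun s : ℝ => -((b + 2 * s : ℝ) : ℂ) / m) (-2 / m) 0 := by
    simpa using ((((hasDerivAt_id (0 : ℝ)).const_mul 2).const_add b).ofReal_comp.neg.div_const m)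
  rw [funext fun s => (hasDerivAt_mul_cexp_sub_quadratic c k m a b s).deriv,
    ((hasDerivAt_mul_cexp_sub_quadratic c k m a b 0).fun_mul hlin).deriv]
  simp
  ring

theorem hasDerivAt_cpow_mul_ofReal {c : ℂ} (p : ℂ) (hc : 0 < c.re) {t : ℝ} (ht : 0 < t) :
    HasDerivAt (fun τ : ℝ => (c * τ) ^ p) ((c * t) ^ p * (p / t)) t := by
  have hc0 : c ≠ 0 := fun h => by simp [h] at hc
  have ht0 : (t : ℂ) ≠ 0 := by exact_mod_cast ht.ne'
  have hct : c * t ≠ 0 := mul_ne_zero hc0 ht0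
  have hslit : c * t ∈ Complex.slitPlane := by
    rw [Complex.mem_slitPlane_iff]
    left
    simpa using mul_pos hc ht
  have h : HasDerivAt (fun z : ℂ => (c * z) ^ p) (p * (c * t) ^ (p - 1) * c) t := by
    simpa using ((hasDerivAt_id (t : ℂ)).const_mul c).cpow_const (c := p) hslit
  refine h.comp_ofReal.congr_deriv ?_
  rw [Complex.cpow_sub _ _ hct, Complex.cpow_one]
  field_simp

section OrnsteinUhlenbeck

variable {d : ℕ} {α δ : ℂ} {S : Matrix (Fin d) (Fin d) ℝ} (x ξ : EuclideanSpace ℝ (Fin d))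

theorem norm_ouRot_add_smul_single_sub_sq (hS : Sᵀ = -S) (t s : ℝ) (i : Fin d) :
    ‖ouRot d S t (x + s • EuclideanSpace.single i 1) - ξ‖ ^ 2 =
      ‖ouRot d S t x - ξ‖ ^ 2
        + 2 * ⟪ouRot d S t x - ξ, ouRot d S t (EuclideanSpace.single i 1)⟫ * s + s ^ 2 := by
  have h := (expSmulIsometry hS t).toLinearIsometry.norm_map_add_smul_sub_sq x
    (EuclideanSpace.single i 1) ξ s
  rwa [PiLp.norm_single, norm_one, one_pow, one_mul] at h

theorem deriv_ouH_add_smul_single (hS : Sᵀ = -S) (t : ℝ) (i : Fin d) :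
    deriv (fun s : ℝ => ouH d α δ S (x + s • EuclideanSpace.single i 1) ξ t) 0 =
      ouH d α δ S x ξ t *
        (-((2 * ⟪ouRot d S t x - ξ, ouRot d S t (EuclideanSpace.single i 1)⟫ : ℝ) : ℂ)
          / (4 * α * t)) := by
  simp only [ouH, norm_ouRot_add_smul_single_sub_sq x ξ hS]
  exact deriv_mul_cexp_sub_quadratic _ _ _ _ _

theorem deriv_deriv_ouH_add_smul_single (hS : Sᵀ = -S) (t : ℝ) (i : Fin d) :
    deriv (fun s : ℝ => deriv (fun r : ℝ => ouH d α δ S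
        ((x + s • EuclideanSpace.single i 1) + r • EuclideanSpace.single i 1) ξ t) 0) 0 =
      ouH d α δ S x ξ t *
        ((((2 * ⟪ouRot d S t x - ξ, ouRot d S t (EuclideanSpace.single i 1)⟫ : ℝ) : ℂ)
          / (4 * α * t)) ^ 2 - 2 / (4 * α * t)) := by
  have hshift : ∀ s : ℝ, deriv (fun r : ℝ => ouH d α δ S
      ((x + s • EuclideanSpace.single i 1) + r • EuclideanSpace.single i 1) ξ t) 0 =
      deriv (fun s : ℝ => ouH d α δ S (x + s • EuclideanSpace.single i 1) ξ t) s := by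
    intro s
    simpa [add_assoc, ← add_smul] using
      deriv_comp_const_add (fun s : ℝ => ouH d α δ S (x + s • EuclideanSpace.single i 1) ξ t) s 0
  rw [funext hshift]
  simp only [ouH, norm_ouRot_add_smul_single_sub_sq x ξ hS]
  exact deriv_deriv_mul_cexp_sub_quadratic _ _ _ _ _

theorem hasDerivAt_norm_ouRot_sub_sq (t : ℝ) :
    HasDerivAt (fun τ : ℝ => ‖ouRot d S τ x - ξ‖ ^ 2)
      (2 * ⟪ouRot d S t x - ξ, ouRot d S t (WithLp.toLp 2 (S *ᵥ x.ofLp))⟫) t :=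
  ((hasDerivAt_exp_smul_mulVec S x t).sub_const ξ).norm_sq

theorem hasDerivAt_ouH_time (hα : 0 < α.re) {t : ℝ} (ht : 0 < t) :
    HasDerivAt (fun τ : ℝ => ouH d α δ S x ξ τ)
      (ouH d α δ S x ξ t * (-(d : ℂ) / 2 / t - δ
        - (((2 * ⟪ouRot d S t x - ξ, ouRot d S t (WithLp.toLp 2 (S *ᵥ x.ofLp))⟫ : ℝ) : ℂ)
            * (4 * α * t) - ((‖ouRot d S t x - ξ‖ ^ 2 : ℝ) : ℂ) * (4 * α))
          / (4 * α * t) ^ 2)) t := by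
  have hre : 0 < (4 * (Real.pi : ℂ) * α).re := by
    simpa using mul_pos (mul_pos four_pos Real.pi_pos) hα
  have h4αt : 4 * α * (t : ℂ) ≠ 0 :=
    mul_ne_zero (mul_ne_zero (by norm_num) fun h => by simp [h] at hα) (by exact_mod_cast ht.ne')
  have hprefactor := hasDerivAt_cpow_mul_ofReal (-(d : ℂ) / 2) hre ht
  have hlin : ∀ c : ℂ, HasDerivAt (fun τ : ℝ => c * τ) c t := fun c => by
    simpa using (Complex.ofRealCLM.hasDerivAt (x := t)).const_mul c
  have hexponent := ((hlin δ).neg.sub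
    ((hasDerivAt_norm_ouRot_sub_sq (S := S) x ξ t).ofReal_comp.div (hlin (4 * α)) h4αt)).cexp
  refine (hprefactor.fun_mul hexponent).congr_deriv ?_
  simp only [ouH, Pi.sub_apply, Pi.neg_apply, Pi.div_apply]
  ring

theorem sum_deriv_deriv_ouH_add_smul_single (hS : Sᵀ = -S) (t : ℝ) :
    ∑ i, deriv (fun s : ℝ => deriv (fun r : ℝ => ouH d α δ S
        ((x + s • EuclideanSpace.single i 1) + r • EuclideanSpace.single i 1) ξ t) 0) 0 =
      ouH d α δ S x ξ t *
        (4 * ((‖ouRot d S t x - ξ‖ ^ 2 : ℝ) : ℂ) / (4 * α * t) ^ 2 - 2 * d / (4 * α * t)) := by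
  have hsum : ∑ i, ((⟪ouRot d S t x - ξ, ouRot d S t (EuclideanSpace.single i 1)⟫ : ℝ) : ℂ) ^ 2
      = ((‖ouRot d S t x - ξ‖ ^ 2 : ℝ) : ℂ) := by
    exact_mod_cast (expSmulIsometry hS t).sum_inner_apply_single_sq (ouRot d S t x - ξ)
  simp only [deriv_deriv_ouH_add_smul_single x ξ hS, ← Finset.mul_sum, Finset.sum_sub_distrib,
    div_pow, Complex.ofReal_mul, mul_pow, ← Finset.sum_div, hsum, Finset.sum_const,
    Finset.card_univ, Fintype.card_fin, nsmul_eq_mul]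
  push_cast
  ring

theorem sum_mulVec_mul_deriv_ouH_add_smul_single (hS : Sᵀ = -S) (t : ℝ) :
    ∑ i, ((S *ᵥ x.ofLp) i : ℂ) *
        deriv (fun s : ℝ => ouH d α δ S (x + s • EuclideanSpace.single i 1) ξ t) 0 =
      ouH d α δ S x ξ t *
        (-((2 * ⟪ouRot d S t x - ξ, ouRot d S t (WithLp.toLp 2 (S *ᵥ x.ofLp))⟫ : ℝ) : ℂ)
          / (4 * α * t)) := by
  have hsum : ∑ i, ((S *ᵥ x.ofLp) i : ℂ) *
        ((⟪ouRot d S t x - ξ, ouRot d S t (EuclideanSpace.single i 1)⟫ : ℝ) : ℂ)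
      = ((⟪ouRot d S t x - ξ, ouRot d S t (WithLp.toLp 2 (S *ᵥ x.ofLp))⟫ : ℝ) : ℂ) := by
    exact_mod_cast (expSmulIsometry hS t).sum_mul_inner_apply_single
      (WithLp.toLp 2 (S *ᵥ x.ofLp)) (ouRot d S t x - ξ)
  simp only [deriv_ouH_add_smul_single x ξ hS]
  calc _ = ∑ i, ouH d α δ S x ξ t * (-2 / (4 * α * t)) * (((S *ᵥ x.ofLp) i : ℂ) *
          ((⟪ouRot d S t x - ξ, ouRot d S t (EuclideanSpace.single i 1)⟫ : ℝ) : ℂ)) :=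
        Finset.sum_congr rfl fun i _ => by push_cast; ring
    _ = _ := by
        rw [← Finset.mul_sum, hsum]
        push_cast
        ring

end OrnsteinUhlenbeck

theorem ouKernel_solves_heat_equation_general
    (d : ℕ) (α δ : ℂ) (hα : 0 < α.re)
    (S : Matrix (Fin d) (Fin d) ℝ) (hS : S.transpose = -S)
    (x ξ : EuclideanSpace ℝ (Fin d)) (t : ℝ) (ht : 0 < t) :
    HasDerivAt (fun τ : ℝ => ouH d α δ S x ξ τ)
      (α * ∑ i : Fin d,
          deriv (fun s : ℝ =>
            deriv (fun r : ℝ =>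
              ouH d α δ S
                ((x + s • EuclideanSpace.single i (1 : ℝ))
                  + r • EuclideanSpace.single i (1 : ℝ)) ξ t) 0) 0
        + ∑ i : Fin d, ((S.mulVec (fun j => x j) i : ℝ) : ℂ) *
            deriv (fun s : ℝ =>
              ouH d α δ S (x + s • EuclideanSpace.single i (1 : ℝ)) ξ t) 0
        - δ * ouH d α δ S x ξ t) t := by
  have hα0 : α ≠ 0 := fun h => by simp [h] at hα
  have ht0 : (t : ℂ) ≠ 0 := by exact_mod_cast ht.ne'
  refine (hasDerivAt_ouH_time x ξ hα ht).congr_deriv ?_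
  rw [sum_deriv_deriv_ouH_add_smul_single x ξ hS, sum_mulVec_mul_deriv_ouH_add_smul_single x ξ hS]
  field_simp
  ring

/-- the kernel `H` solves `∂H/∂t = α ΔH + ⟨Sx, ∇H⟩ - δ H`. -/
theorem ouKernel_solves_heat_equation
    (d : ℕ) (hd : 1 ≤ d) (α δ : ℂ) (hα : 0 < α.re)
    (S : Matrix (Fin d) (Fin d) ℝ) (hS : S.transpose = -S)
    (x ξ : EuclideanSpace ℝ (Fin d)) (t : ℝ) (ht : 0 < t) :
    HasDerivAt (fun τ : ℝ => ouH d α δ S x ξ τ)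
      (α * ∑ i : Fin d,
          deriv (fun s : ℝ =>
            deriv (fun r : ℝ =>
              ouH d α δ S
                ((x + s • EuclideanSpace.single i (1 : ℝ))
                  + r • EuclideanSpace.single i (1 : ℝ)) ξ t) 0) 0
        + ∑ i : Fin d, ((S.mulVec (fun j => x j) i : ℝ) : ℂ) *
            deriv (fun s : ℝ =>
              ouH d α δ S (x + s • EuclideanSpace.single i (1 : ℝ)) ξ t) 0
        - δ * ouH d α δ S x ξ t) t :=
  ouKernel_solves_heat_equation_general d α δ hα S hS x ξ t ht
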